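/- arXiv:2209.12730 — 5 statements merged into one kernel-verified Lean document; each statement's English description precedes it below -/
import Mathlib

section
/- Let λ > 0 and let k ≥ 2 be a natural number. Then ∑_{n=0}^{k−2} e^{−λ} λ^n / n! ≤ ((k−1)/λ) · ∑_{n=0}^{k−1} e^{−λ} λ^n / n!. In probabilistic terms: if X is a Poisson random variable with mean λ, then P(X ≤ k−2) / P(X ≤ k−1) ≤ (k−1)/λ. -/
open Real Finset

/-- If `X` is Poisson with mean `lam` and `k ≥ 2`, then `P(X ≤ k-2) ≤ ((k-1)/lam) * P(X ≤ k-1)`. -/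
theorem stmt_7 (lam : ℝ) (hlam : 0 < lam) (k : ℕ) (hk : 2 ≤ k) :
    ∑ n ∈ Finset.range (k - 1), Real.exp (-lam) * lam ^ n / (n.factorial : ℝ)
      ≤ (((k : ℝ) - 1) / lam) *
        ∑ n ∈ Finset.range k, Real.exp (-lam) * lam ^ n / (n.factorial : ℝ) := by
  set p : ℕ → ℝ := fun n => Real.exp (-lam) * lam ^ n / (n.factorial : ℝ) with hp
  have step : ∀ n ∈ Finset.range (k - 1),
      p n ≤ (((k : ℝ) - 1) / lam) * p (n + 1) := by
    intro n hn
    have hn' : n + 1 ≤ k - 1 := Finset.mem_range.mp hn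
    have hnk : (n : ℝ) + 1 ≤ (k : ℝ) - 1 := by
      have : n + 2 ≤ k := by omega
      have := (Nat.cast_le (α := ℝ)).mpr this
      push_cast at this ⊢
      linarith
    have hfac : ((n + 1).factorial : ℝ) = ((n : ℝ) + 1) * (n.factorial : ℝ) := by
      rw [Nat.factorial_succ]; push_cast; ring
    have hfp : (0 : ℝ) < (n.factorial : ℝ) := by positivity
    have hkey : (((k : ℝ) - 1) / lam) * p (n + 1)
        = (((k : ℝ) - 1) / ((n : ℝ) + 1)) * p n := by
      simp only [hp, pow_succ, hfac]
      field_simp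
    rw [hkey]
    have hppos : 0 < p n := by simp only [hp]; positivity
    have h1 : (1 : ℝ) ≤ ((k : ℝ) - 1) / ((n : ℝ) + 1) := by
      rw [le_div_iff₀ (by positivity)]
      linarith
    nlinarith
  calc ∑ n ∈ Finset.range (k - 1), p n
      ≤ ∑ n ∈ Finset.range (k - 1), (((k : ℝ) - 1) / lam) * p (n + 1) :=
        Finset.sum_le_sum step
    _ = (((k : ℝ) - 1) / lam) * ∑ n ∈ Finset.range (k - 1), p (n + 1) := by
        rw [Finset.mul_sum]
    _ ≤ (((k : ℝ) - 1) / lam) * ∑ n ∈ Finset.range k, p n := by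
        apply mul_le_mul_of_nonneg_left _ (by
          apply div_nonneg _ hlam.le
          have : (2 : ℝ) ≤ (k : ℝ) := by exact_mod_cast hk
          linarith)
        have hks : k = (k - 1) + 1 := by omega
        rw [hks, Finset.sum_range_succ']
        simp only [Nat.add_sub_cancel]
        have hp0 : 0 ≤ p 0 := by simp only [hp]; positivity
        linarith
end

section
/- Let d ≥ 4 be an integer. For every real R ≥ 0 one has | (d−1)·2^{d−1}·e^{−R(d−1)} · ∫_0^R sinh(u)^{d−1} du − 1 | ≤ ((d−1)^2/(d−3)) · e^{−2R}. -/
open Real intervalIntegral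

lemma pow_sub_pow_le' (a b : ℝ) (n : ℕ) (hb : 0 ≤ b) (hab : b ≤ a) :
    a ^ n - b ^ n ≤ n * a ^ (n - 1) * (a - b) := by
  rw [← geom_sum₂_mul]
  have h1 : (∑ i ∈ Finset.range n, a ^ i * b ^ (n - 1 - i)) ≤ n * a ^ (n - 1) := by
    calc (∑ i ∈ Finset.range n, a ^ i * b ^ (n - 1 - i))
        ≤ ∑ i ∈ Finset.range n, a ^ (n - 1) := by
          apply Finset.sum_le_sum
          intro i hi
          have hi' : i < n := Finset.mem_range.mp hi
          have ha : 0 ≤ a := hb.trans hab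
          calc a ^ i * b ^ (n - 1 - i) ≤ a ^ i * a ^ (n - 1 - i) := by
                exact mul_le_mul_of_nonneg_left (pow_le_pow_left₀ hb hab _) (pow_nonneg ha _)
            _ = a ^ (i + (n - 1 - i)) := (pow_add a i _).symm
            _ = a ^ (n - 1) := by congr 1; omega
      _ = n * a ^ (n - 1) := by rw [Finset.sum_const, Finset.card_range, nsmul_eq_mul]
  have hab' : 0 ≤ a - b := sub_nonneg.mpr hab
  exact mul_le_mul_of_nonneg_right h1 hab'

lemma integral_exp_nat_mul (c : ℕ) (hc : 0 < c) (R : ℝ) :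
    ∫ u in (0:ℝ)..R, Real.exp (c * u) = (Real.exp (c * R) - 1) / c := by
  have h : ∀ x ∈ Set.uIcc (0:ℝ) R, HasDerivAt (fun x => Real.exp (c * x) / c)
      (Real.exp (c * x)) x := by
    intro x _
    have h0 : HasDerivAt (fun x => (c:ℝ) * x) (c:ℝ) x := by
      simpa using (hasDerivAt_id x).const_mul (c:ℝ)
    have : HasDerivAt (fun x => Real.exp (c * x)) (Real.exp (c * x) * c) x := h0.exp
    have := this.div_const (c:ℝ)
    simpa [mul_div_assoc, mul_div_cancel_right₀ _ (Nat.cast_ne_zero.mpr hc.ne' : (c:ℝ) ≠ 0)]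
      using this
  have := intervalIntegral.integral_eq_sub_of_hasDerivAt h
    (by exact (Real.continuous_exp.comp (continuous_const.mul continuous_id)).intervalIntegrable 0 R)
  simp at this
  rw [this]
  ring

theorem stmt_8 (d : ℕ) (hd : 4 ≤ d) (R : ℝ) (hR : 0 ≤ R) :
    |((d : ℝ) - 1) * 2 ^ (d - 1) * Real.exp (-R * ((d : ℝ) - 1)) *
        (∫ u in (0:ℝ)..R, Real.sinh u ^ (d - 1)) - 1|
      ≤ ((d : ℝ) - 1) ^ 2 / ((d : ℝ) - 3) * Real.exp (-2 * R) := by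
  set n : ℕ := d - 1 with hn
  have hn3 : 3 ≤ n := by omega
  have hcast : ((d : ℝ) - 1) = (n : ℝ) := by
    rw [hn, Nat.cast_sub (by omega : 1 ≤ d)]; norm_num
  set m : ℕ := n - 2 with hm
  have hm1 : 1 ≤ m := by omega
  have hmcast : (n : ℝ) - 2 = (m : ℝ) := by
    rw [hm, Nat.cast_sub (by omega : 2 ≤ n)]; norm_num
  have hdcast : ((d : ℝ) - 3) = (m : ℝ) := by
    rw [← hmcast, ← hcast]; ring
  have hnpos : (0:ℝ) < n := by positivity
  have hmpos : (0:ℝ) < m := by exact_mod_cast hm1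
  set A : ℝ := ∫ u in (0:ℝ)..R, Real.sinh u ^ n with hA
  -- integrability facts
  have hc1 : Continuous fun u : ℝ => (n:ℝ) * Real.exp ((n:ℝ) * u) :=
    continuous_const.mul (Real.continuous_exp.comp (continuous_const.mul continuous_id))
  have hc2 : Continuous fun u : ℝ => (n:ℝ) * 2 ^ n * Real.sinh u ^ n :=
    continuous_const.mul (Real.continuous_sinh.pow n)
  have hc3 : Continuous fun u : ℝ => (n:ℝ)^2 * Real.exp ((m:ℝ) * u) :=
    continuous_const.mul (Real.continuous_exp.comp (continuous_const.mul continuous_id))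
  set I : ℝ := ∫ u in (0:ℝ)..R,
      ((n:ℝ) * Real.exp ((n:ℝ) * u) - (n:ℝ) * 2 ^ n * Real.sinh u ^ n) with hI
  have hIdef : I = (Real.exp ((n:ℝ) * R) - 1) - (n:ℝ) * 2 ^ n * A := by
    rw [hI, intervalIntegral.integral_sub (hc1.intervalIntegrable 0 R)
      (hc2.intervalIntegrable 0 R), intervalIntegral.integral_const_mul,
      intervalIntegral.integral_const_mul, integral_exp_nat_mul n (by omega) R, hA]
    field_simp
  -- pointwise facts
  have hkey : ∀ u : ℝ, 0 ≤ u →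
      (0 ≤ (n:ℝ) * Real.exp ((n:ℝ) * u) - (n:ℝ) * 2 ^ n * Real.sinh u ^ n ∧
       (n:ℝ) * Real.exp ((n:ℝ) * u) - (n:ℝ) * 2 ^ n * Real.sinh u ^ n
         ≤ (n:ℝ)^2 * Real.exp ((m:ℝ) * u)) := by
    intro u hu
    have hb0 : (0:ℝ) ≤ Real.exp u - Real.exp (-u) :=
      sub_nonneg.mpr (Real.exp_le_exp.mpr (by linarith))
    have hba : Real.exp u - Real.exp (-u) ≤ Real.exp u := by
      have := Real.exp_pos (-u); linarith
    have h2s : (2:ℝ) ^ n * Real.sinh u ^ n = (Real.exp u - Real.exp (-u)) ^ n := by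
      rw [← mul_pow, Real.sinh_eq]; ring_nf
    have hexpn : Real.exp ((n:ℝ) * u) = Real.exp u ^ n := Real.exp_nat_mul u n
    constructor
    · have : (Real.exp u - Real.exp (-u)) ^ n ≤ Real.exp u ^ n :=
        pow_le_pow_left₀ hb0 hba n
      nlinarith [this, hnpos, h2s, hexpn]
    · have hps := pow_sub_pow_le' (Real.exp u) (Real.exp u - Real.exp (-u)) n hb0 hba
      have hsub : Real.exp u - (Real.exp u - Real.exp (-u)) = Real.exp (-u) := by ring
      rw [hsub] at hps
      have hmexp : Real.exp u ^ (n - 1) * Real.exp (-u) = Real.exp ((m:ℝ) * u) := by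
        rw [← Real.exp_nat_mul, ← Real.exp_add]
        congr 1
        have : ((n - 1 : ℕ) : ℝ) = (n:ℝ) - 1 := by
          rw [Nat.cast_sub (by omega : 1 ≤ n)]; norm_num
        rw [this, ← hmcast]; ring
      have : Real.exp u ^ n - (Real.exp u - Real.exp (-u)) ^ n
          ≤ (n:ℝ) * Real.exp ((m:ℝ) * u) := by
        calc Real.exp u ^ n - (Real.exp u - Real.exp (-u)) ^ n
            ≤ (n:ℝ) * Real.exp u ^ (n-1) * Real.exp (-u) := hps
          _ = (n:ℝ) * Real.exp ((m:ℝ) * u) := by rw [mul_assoc, hmexp]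
      nlinarith [this, hnpos, h2s, hexpn]
  have hInonneg : 0 ≤ I := by
    rw [hI]
    apply intervalIntegral.integral_nonneg hR
    intro u hu
    exact (hkey u hu.1).1
  have hIle : I ≤ (n:ℝ)^2 * ((Real.exp ((m:ℝ) * R) - 1) / m) := by
    have := intervalIntegral.integral_mono_on (μ := MeasureTheory.volume) hR
      ((hc1.sub hc2).intervalIntegrable 0 R) (hc3.intervalIntegrable 0 R)
      (fun u hu => (hkey u hu.1).2)
    rw [hI]
    calc (∫ u in (0:ℝ)..R, ((n:ℝ) * Real.exp ((n:ℝ) * u) - (n:ℝ) * 2 ^ n * Real.sinh u ^ n))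
        ≤ ∫ u in (0:ℝ)..R, (n:ℝ)^2 * Real.exp ((m:ℝ) * u) := this
      _ = (n:ℝ)^2 * ((Real.exp ((m:ℝ) * R) - 1) / m) := by
          rw [intervalIntegral.integral_const_mul, integral_exp_nat_mul m (by omega) R]
  -- main rewriting
  have hexprR : Real.exp (-R * ((d:ℝ) - 1)) = Real.exp (-(n:ℝ) * R) := by
    rw [hcast]; ring_nf
  have hmain : ((d : ℝ) - 1) * 2 ^ n * Real.exp (-R * ((d : ℝ) - 1)) * A - 1
      = -(Real.exp (-(n:ℝ) * R) * (1 + I)) := by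
    rw [hcast, show (-R * (n:ℝ)) = (-(n:ℝ)*R) from by ring, hIdef]
    have hx : Real.exp (-(n:ℝ) * R) * Real.exp ((n:ℝ) * R) = 1 := by
      rw [← Real.exp_add]; ring_nf; exact Real.exp_zero
    nlinarith [hx]
  rw [hmain, abs_neg, abs_of_nonneg (by positivity)]
  -- final estimate
  have hfrac1 : (1:ℝ) ≤ (n:ℝ)^2 / m := by
    rw [le_div_iff₀ hmpos]
    have : (m:ℝ) ≤ (n:ℝ) := by exact_mod_cast (by omega : m ≤ n)
    nlinarith [hn3, hnpos, this]
  have h1I : 1 + I ≤ (n:ℝ)^2 / m * Real.exp ((m:ℝ) * R) := by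
    have hexpm : (1:ℝ) ≤ Real.exp ((m:ℝ) * R) := by
      rw [Real.one_le_exp_iff]; positivity
    calc 1 + I ≤ 1 + (n:ℝ)^2 * ((Real.exp ((m:ℝ) * R) - 1) / m) := by linarith
      _ = (n:ℝ)^2 / m * Real.exp ((m:ℝ) * R) + (1 - (n:ℝ)^2 / m) := by field_simp; ring
      _ ≤ (n:ℝ)^2 / m * Real.exp ((m:ℝ) * R) := by linarith
  calc Real.exp (-(n:ℝ) * R) * (1 + I)
      ≤ Real.exp (-(n:ℝ) * R) * ((n:ℝ)^2 / m * Real.exp ((m:ℝ) * R)) :=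
        mul_le_mul_of_nonneg_left h1I (le_of_lt (Real.exp_pos _))
    _ = (n:ℝ)^2 / m * Real.exp (-2 * R) := by
        rw [mul_comm, mul_assoc, ← Real.exp_add]
        congr 2
        rw [← hmcast]; ring
    _ = ((d : ℝ) - 1) ^ 2 / ((d : ℝ) - 3) * Real.exp (-2 * R) := by
        rw [hcast, hdcast]
end

section
/- Let d ≥ 2 be an integer, ℓ a natural number, and α₁, α₂ > 0. There exists a constant β > 0, depending only on d, ℓ, α₁, α₂, such that for all real r > 0, r′ > 0 and all a ∈ (0,1] satisfying α₁ · e^{(d−1)(2r − a r′)/2} ≥ 2(d−1), one has ∫_0^{a r′} e^{(d−1)s} · exp(−α₁ s e^{(d−1)(r − s/2)}) · (α₂ s e^{(d−1)r})^ℓ / ℓ! ds ≤ β · exp( −(d−1)(2r − a(ℓ+1) r′)/2 ). -/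
/-!
On `[0, a r']` the inner exponential `exp ((d - 1) (r - s / 2))` is at least
`M = exp ((d - 1) (2 r - a r') / 2)`, and the hypothesis `2 (d - 1) ≤ α₁ M` lets the decay
`exp (-α₁ M s)` absorb the growth `exp ((d - 1) s)` at the cost of half its rate. The integrand is
thus at most a constant times `s ^ ℓ exp (-(α₁ M / 2) s)`, whose integral over `[0, ∞)` is the
Gamma integral `ℓ! / (α₁ M / 2) ^ (ℓ + 1)`; the power of `M` produces the stated exponential.
-/

open Real

lemma exp_mul_mul_exp_neg_le {D α M E s : ℝ} (hα : 0 ≤ α) (hs : 0 ≤ s) (hME : M ≤ E)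
    (hD : 2 * D ≤ α * M) :
    exp (D * s) * exp (-(α * s * E)) ≤ exp (-(α * M / 2 * s)) := by
  rw [← exp_add, exp_le_exp]
  have : α * s * M ≤ α * s * E := by gcongr
  nlinarith

lemma integrand_le_pow_mul_exp_neg {D r T α₁ α₂ s : ℝ} (ℓ : ℕ) (hD : 0 ≤ D) (hα₁ : 0 ≤ α₁)
    (hα₂ : 0 ≤ α₂) (hs : s ∈ Set.Icc 0 T)
    (hcond : 2 * D ≤ α₁ * exp (D * (2 * r - T) / 2)) :
    exp (D * s) * exp (-(α₁ * s * exp (D * (r - s / 2)))) *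
        (α₂ * s * exp (D * r)) ^ ℓ / ℓ.factorial
      ≤ (α₂ * exp (D * r)) ^ ℓ / ℓ.factorial *
        (s ^ ℓ * exp (-(α₁ * exp (D * (2 * r - T) / 2) / 2 * s))) := by
  obtain ⟨hs0, hsT⟩ := hs
  have hM : exp (D * (2 * r - T) / 2) ≤ exp (D * (r - s / 2)) := by
    rw [exp_le_exp]
    nlinarith
  calc exp (D * s) * exp (-(α₁ * s * exp (D * (r - s / 2)))) *
          (α₂ * s * exp (D * r)) ^ ℓ / ℓ.factorial
      = (α₂ * exp (D * r)) ^ ℓ / ℓ.factorial * s ^ ℓ *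
          (exp (D * s) * exp (-(α₁ * s * exp (D * (r - s / 2))))) := by ring
    _ ≤ (α₂ * exp (D * r)) ^ ℓ / ℓ.factorial * s ^ ℓ *
          exp (-(α₁ * exp (D * (2 * r - T) / 2) / 2 * s)) := by
        gcongr
        exact exp_mul_mul_exp_neg_le hα₁ hs0 hM hcond
    _ = _ := by ring

lemma pow_div_pow_succ_eq_exp {D r T : ℝ} (ℓ : ℕ) :
    exp (D * r) ^ ℓ / exp (D * (2 * r - T) / 2) ^ (ℓ + 1)
      = exp (-(D * (2 * r - (ℓ + 1) * T) / 2)) := by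
  rw [← exp_nat_mul, ← exp_nat_mul, ← exp_sub]
  congr 1
  push_cast
  ring

theorem stmt_9 (d : ℕ) (hd : 2 ≤ d) (ℓ : ℕ) (α₁ α₂ : ℝ) (hα₁ : 0 < α₁) (hα₂ : 0 < α₂) :
    ∃ β : ℝ, 0 < β ∧ ∀ r r' a : ℝ, 0 < r → 0 < r' → 0 < a → a ≤ 1 →
      2 * ((d : ℝ) - 1) ≤ α₁ * Real.exp (((d : ℝ) - 1) * (2 * r - a * r') / 2) →
      (∫ s in (0:ℝ)..(a * r'),
          Real.exp (((d : ℝ) - 1) * s) *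
            Real.exp (-(α₁ * s * Real.exp (((d : ℝ) - 1) * (r - s / 2)))) *
            (α₂ * s * Real.exp (((d : ℝ) - 1) * r)) ^ ℓ / (ℓ.factorial : ℝ))
        ≤ β * Real.exp (-(((d : ℝ) - 1) * (2 * r - a * ((ℓ : ℝ) + 1) * r') / 2)) := by
  refine ⟨(2 / α₁) ^ (ℓ + 1) * α₂ ^ ℓ, by positivity, fun r r' a _ hr' ha _ hcond => ?_⟩
  set D : ℝ := (d : ℝ) - 1
  have hD : 0 ≤ D := by
    have : (2 : ℝ) ≤ d := by exact_mod_cast hd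
    linarith
  set M := exp (D * (2 * r - a * r') / 2)
  have hT : 0 ≤ a * r' := by positivity
  calc _ ≤ ∫ s in (0:ℝ)..(a * r'), (α₂ * exp (D * r)) ^ ℓ / ℓ.factorial *
          (s ^ ℓ * exp (-(α₁ * M / 2 * s))) :=
        intervalIntegral.integral_mono_on hT (by apply Continuous.intervalIntegrable; fun_prop)
          (by apply Continuous.intervalIntegrable; fun_prop)
          (fun s hs => integrand_le_pow_mul_exp_neg ℓ hD hα₁.le hα₂.le hs hcond)
    _ ≤ (α₂ * exp (D * r)) ^ ℓ / ℓ.factorial * (ℓ.factorial / (α₁ * M / 2) ^ (ℓ + 1)) := by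
        rw [intervalIntegral.integral_const_mul]
        gcongr
        exact intervalIntegral_pow_mul_exp_neg_le hT (by positivity)
    _ = (2 / α₁) ^ (ℓ + 1) * α₂ ^ ℓ * (exp (D * r) ^ ℓ / M ^ (ℓ + 1)) := by
        have : 0 < M := exp_pos _
        rw [div_mul_div_cancel₀ (by positivity), div_pow, div_pow, mul_pow, mul_pow]
        field_simp
    _ = _ := by
        rw [pow_div_pow_succ_eq_exp]
        ring_nf
end

section
/- Let d ≥ 2 be an integer, ℓ a natural number, γ > 0 and M > 0. There exists a constant β > 0, depending only on d, ℓ, γ, M, such that for all real r′ > 0 and all a ∈ (0,1] one has ∫_{a r′}^{2 r′} e^{(d−1)s} · exp(−γ s e^{(d−1)s/2}) · (γ s e^{(d−1)s/2})^ℓ / ℓ! ds ≤ β · (a r′)^{−(M+2)} · exp( −(d−1) M a r′ / 2 ). -/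
open Real

/-!
Write `x = γ s e^{(d-1)s/2}`. The Poisson-type factor `e^{-x} x^ℓ` is at most `n! x^{-(M+2)}` for
`n = ⌈ℓ + M + 2⌉`, and `x^{-(M+2)} = γ^{-(M+2)} s^{-(M+2)} e^{-(d-1)(M+2)s/2}` absorbs the volume
growth `e^{(d-1)s}`, leaving `s^{-(M+2)} e^{-(d-1)Ms/2}`. On `[a r', 2 r']` the power is at most
`(a r')^{-(M+2)}` and the exponential integrates to at most its value at `a r'` over `(d-1)M/2`.
-/

theorem Real.rpow_le_factorial_ceil_mul_exp {x p : ℝ} (hx : 0 ≤ x) (hp : 0 ≤ p) :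
    x ^ p ≤ (⌈p⌉₊.factorial : ℝ) * exp x := by
  have hfac : (1 : ℝ) ≤ ⌈p⌉₊.factorial := by exact_mod_cast ⌈p⌉₊.factorial_pos
  rcases le_or_gt x 1 with hx1 | hx1
  · calc x ^ p ≤ 1 := rpow_le_one hx hx1 hp
      _ ≤ ⌈p⌉₊.factorial * exp x := one_le_mul_of_one_le_of_one_le hfac (one_le_exp hx)
  · calc x ^ p ≤ x ^ (⌈p⌉₊ : ℝ) := rpow_le_rpow_of_exponent_le hx1.le (Nat.le_ceil p)
      _ = x ^ ⌈p⌉₊ := rpow_natCast x _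
      _ ≤ ⌈p⌉₊.factorial * exp x := by
        rw [← div_le_iff₀' (by positivity)]
        exact pow_div_factorial_le_exp x hx _

theorem Real.exp_neg_mul_pow_le_mul_rpow_neg {x q : ℝ} (hx : 0 < x) (hq : 0 ≤ q) (ℓ : ℕ) :
    exp (-x) * x ^ ℓ ≤ (⌈ℓ + q⌉₊.factorial : ℝ) * x ^ (-q) := by
  have h := rpow_le_factorial_ceil_mul_exp hx.le (by positivity : 0 ≤ (ℓ : ℝ) + q)
  rw [rpow_add hx, rpow_natCast] at h
  calc exp (-x) * x ^ ℓ = exp (-x) * (x ^ ℓ * x ^ q) * x ^ (-q) := by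
        rw [rpow_neg hx.le]; field_simp
    _ ≤ exp (-x) * (⌈ℓ + q⌉₊.factorial * exp x) * x ^ (-q) := by gcongr
    _ = ⌈ℓ + q⌉₊.factorial * x ^ (-q) := by rw [exp_neg]; field_simp

theorem Real.exp_mul_exp_neg_mul_pow_div_factorial_le {κ γ M s : ℝ} (hγ : 0 < γ) (hs : 0 < s)
    (hM : 0 ≤ M + 2) (ℓ : ℕ) :
    exp (κ * s) * exp (-(γ * s * exp (κ * s / 2))) * (γ * s * exp (κ * s / 2)) ^ ℓ /
        ℓ.factorial ≤
      ⌈ℓ + (M + 2)⌉₊.factorial * γ ^ (-(M + 2)) * s ^ (-(M + 2)) * exp (-(κ * M / 2 * s)) := by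
  set x := γ * s * exp (κ * s / 2)
  have hx : 0 < x := by positivity
  have hexp : exp (-(κ * M / 2 * s)) = exp (κ * s) * exp (κ * s / 2 * -(M + 2)) := by
    rw [← exp_add]; ring_nf
  calc exp (κ * s) * exp (-x) * x ^ ℓ / ℓ.factorial
      = exp (κ * s) * (exp (-x) * x ^ ℓ) / ℓ.factorial := by ring
    _ ≤ exp (κ * s) * (exp (-x) * x ^ ℓ) :=
        div_le_self (by positivity) (by exact_mod_cast ℓ.factorial_pos)
    _ ≤ exp (κ * s) * (⌈ℓ + (M + 2)⌉₊.factorial * x ^ (-(M + 2))) :=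
        mul_le_mul_of_nonneg_left (exp_neg_mul_pow_le_mul_rpow_neg hx hM ℓ) (exp_pos _).le
    _ = _ := by
        rw [mul_rpow (by positivity) (exp_pos _).le, mul_rpow hγ.le hs.le, ← exp_mul, hexp]
        ring

theorem intervalIntegral.integral_le_div_of_le_mul_exp_neg {f : ℝ → ℝ} {t T A c : ℝ}
    (hf : IntervalIntegrable f MeasureTheory.volume t T) (htT : t ≤ T) (hA : 0 ≤ A) (hc : 0 < c)
    (h : ∀ s ∈ Set.Icc t T, f s ≤ A * exp (-(c * s))) :
    ∫ s in t..T, f s ≤ A * exp (-(c * t)) / c := by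
  have hint : ∫ s in t..T, exp (-(c * s)) = (exp (-(c * t)) - exp (-(c * T))) / c := by
    rw [integral_comp_mul_left (fun x => exp (-x)) hc.ne', integral_comp_neg, integral_exp,
      smul_eq_mul, inv_mul_eq_div]
  calc ∫ s in t..T, f s ≤ ∫ s in t..T, A * exp (-(c * s)) :=
        integral_mono_on htT hf (Continuous.intervalIntegrable (by fun_prop) _ _) h
    _ = A * ((exp (-(c * t)) - exp (-(c * T))) / c) := by rw [integral_const_mul, hint]
    _ ≤ A * exp (-(c * t)) / c := by
        rw [mul_div_assoc]; gcongr; linarith [exp_pos (-(c * T))]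

theorem stmt_10 (d : ℕ) (hd : 2 ≤ d) (ℓ : ℕ) (γ M : ℝ) (hγ : 0 < γ) (hM : 0 < M) :
    ∃ β : ℝ, 0 < β ∧ ∀ r' a : ℝ, 0 < r' → 0 < a → a ≤ 1 →
      (∫ s in (a * r')..(2 * r'),
          Real.exp (((d : ℝ) - 1) * s) *
            Real.exp (-(γ * s * Real.exp (((d : ℝ) - 1) * s / 2))) *
            (γ * s * Real.exp (((d : ℝ) - 1) * s / 2)) ^ ℓ / (ℓ.factorial : ℝ))
        ≤ β * (a * r') ^ (-(M + 2)) * Real.exp (-((d : ℝ) - 1) * M * a * r' / 2) := by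
  have hκ : 0 < (d : ℝ) - 1 := by
    have : (2 : ℝ) ≤ d := by exact_mod_cast hd
    linarith
  set c := ((d : ℝ) - 1) * M / 2
  have hc : 0 < c := by positivity
  set K : ℝ := ⌈ℓ + (M + 2)⌉₊.factorial * γ ^ (-(M + 2))
  have hK : 0 < K := by positivity
  refine ⟨K / c, by positivity, fun r' a hr' ha ha1 => ?_⟩
  have hlower : 0 < a * r' := mul_pos ha hr'
  calc _ ≤ K * (a * r') ^ (-(M + 2)) * exp (-(c * (a * r'))) / c := by
        refine intervalIntegral.integral_le_div_of_le_mul_exp_neg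
          (Continuous.intervalIntegrable (by fun_prop) _ _) (by nlinarith) (by positivity) hc
          fun s hs => ?_
        calc _ ≤ K * s ^ (-(M + 2)) * exp (-(c * s)) :=
              exp_mul_exp_neg_mul_pow_div_factorial_le hγ (hlower.trans_le hs.1) (by linarith) ℓ
          _ ≤ K * (a * r') ^ (-(M + 2)) * exp (-(c * s)) := by
              gcongr K * ?_ * _
              exact rpow_le_rpow_of_nonpos hlower hs.1 (by linarith)
    _ = _ := by
        rw [show -(c * (a * r')) = -((d : ℝ) - 1) * M * a * r' / 2 by ring]
        ring
end

section
/- Let d ≥ 4 be an integer and let r > 0 satisfy (d−3)·e^{2r} > (d−1)^2. Set V := ω_d · ∫_0^r sinh(u)^{d−1} du. Then log V ≤ r(d−1) + log( ω_d / ((d−1)·2^{d−1}) ) ≤ log( (d−3)e^{2r} / ((d−3)e^{2r} − (d−1)^2) ) + log V. -/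
/-!
Write `n = d - 1` and `2 sinh u = eᵘ (1 - e⁻²ᵘ)`. For `u ≥ 0` the factor `(1 - e⁻²ᵘ)ⁿ` lies between
`1 - n e⁻²ᵘ` (Bernoulli) and `1`, so `e^{nu} - n e^{(n-2)u} ≤ (2 sinh u)ⁿ ≤ e^{nu}`. Integrating over
`[0, r]` gives `e^{nr}/n - n e^{(n-2)r}/(n-2) ≤ 2ⁿ ∫₀ʳ sinhⁿ ≤ e^{nr}/n`, and the lower bound is
`e^{nr}/n` times `((n-2) e^{2r} - n²) / ((n-2) e^{2r})`; taking logarithms gives both inequalities.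
-/

open Real

/-- Surface area of the (d-1)-dimensional Euclidean unit sphere. -/
noncomputable def omegaSphere (d : ℕ) : ℝ :=
  2 * Real.pi ^ ((d : ℝ) / 2) / Real.Gamma ((d : ℝ) / 2)

/-- Volume of a hyperbolic ball of radius `r` in `d`-dimensional hyperbolic space. -/
noncomputable def hypBallVol (d : ℕ) (r : ℝ) : ℝ :=
  omegaSphere d * ∫ u in (0:ℝ)..r, Real.sinh u ^ (d - 1)

open intervalIntegral

lemma integral_exp_mul {c : ℝ} (hc : c ≠ 0) (a b : ℝ) :
    ∫ u in a..b, exp (c * u) = (exp (c * b) - exp (c * a)) / c := by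
  rw [integral_comp_mul_left (fun x => exp x) hc, integral_exp, smul_eq_mul, inv_mul_eq_div]

lemma two_mul_sinh_eq (u : ℝ) : 2 * sinh u = exp u * (1 - exp (-2 * u)) := by
  rw [sinh_eq, mul_sub, mul_one, ← exp_add]
  ring_nf

lemma two_mul_sinh_pow_le_exp {u : ℝ} (hu : 0 ≤ u) (n : ℕ) :
    (2 * sinh u) ^ n ≤ exp (n * u) := by
  rw [exp_nat_mul, two_mul_sinh_eq]
  have : 0 ≤ 1 - exp (-2 * u) := by
    linarith [exp_le_one_iff.2 (by linarith : -2 * u ≤ 0)]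
  gcongr
  exact mul_le_of_le_one_right (exp_pos u).le (by linarith [exp_pos (-2 * u)])

lemma exp_sub_le_two_mul_sinh_pow {u : ℝ} (hu : 0 ≤ u) (n : ℕ) :
    exp (n * u) - n * exp ((n - 2) * u) ≤ (2 * sinh u) ^ n := by
  have bernoulli : 1 + n * (-exp (-2 * u)) ≤ (1 + -exp (-2 * u)) ^ n :=
    one_add_mul_le_pow (by linarith [exp_le_one_iff.2 (by linarith : -2 * u ≤ 0)]) n
  calc exp (n * u) - n * exp ((n - 2) * u)
      = exp u ^ n * (1 + n * (-exp (-2 * u))) := by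
        have : exp ((n - 2) * u) = exp (n * u) * exp (-2 * u) := by rw [← exp_add]; ring_nf
        rw [this, ← exp_nat_mul]
        ring
    _ ≤ exp u ^ n * (1 + -exp (-2 * u)) ^ n := by gcongr
    _ = (2 * sinh u) ^ n := by rw [← mul_pow, two_mul_sinh_eq, ← sub_eq_add_neg]

lemma two_pow_mul_integral_sinh_pow_le {n : ℕ} (hn : 0 < n) {r : ℝ} (hr : 0 ≤ r) :
    2 ^ n * ∫ u in (0:ℝ)..r, sinh u ^ n ≤ exp (n * r) / n := by
  have hn' : (0 : ℝ) < n := by exact_mod_cast hn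
  rw [← integral_const_mul]
  calc ∫ u in (0:ℝ)..r, 2 ^ n * sinh u ^ n ≤ ∫ u in (0:ℝ)..r, exp (n * u) :=
        integral_mono_on hr ((by fun_prop : Continuous _).intervalIntegrable _ _)
          ((by fun_prop : Continuous _).intervalIntegrable _ _) fun u hu => by
          rw [← mul_pow]; exact two_mul_sinh_pow_le_exp hu.1 n
    _ = (exp (n * r) - 1) / n := by rw [integral_exp_mul hn'.ne']; simp
    _ ≤ exp (n * r) / n := by gcongr; linarith

lemma exp_sub_le_two_pow_mul_integral_sinh_pow {n : ℕ} (hn : 2 < n) {r : ℝ} (hr : 0 ≤ r) :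
    exp (n * r) / n - n * exp ((n - 2) * r) / (n - 2) ≤ 2 ^ n * ∫ u in (0:ℝ)..r, sinh u ^ n := by
  have hn' : (2 : ℝ) < n := by exact_mod_cast hn
  have hn0 : (0 : ℝ) < n := by linarith
  have hk0 : (0 : ℝ) < n - 2 := by linarith
  rw [← integral_const_mul]
  calc exp (n * r) / n - n * exp ((n - 2) * r) / (n - 2)
      ≤ (exp (n * r) - 1) / n - n * ((exp ((n - 2) * r) - 1) / (n - 2)) := by
        have h1 : 1 / (n : ℝ) ≤ n / (n - 2) := by
          rw [div_le_div_iff₀ hn0 hk0]; nlinarith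
        have h2 : (exp (n * r) - 1) / n - n * ((exp ((n - 2) * r) - 1) / (n - 2))
            = exp (n * r) / n - n * exp ((n - 2) * r) / (n - 2) + (n / (n - 2) - 1 / n) := by
          ring
        linarith
    _ = ∫ u in (0:ℝ)..r, (exp (n * u) - n * exp ((n - 2) * u)) := by
        rw [integral_sub ((by fun_prop : Continuous _).intervalIntegrable _ _)
          ((by fun_prop : Continuous _).intervalIntegrable _ _), integral_const_mul,
          integral_exp_mul hn0.ne', integral_exp_mul hk0.ne']
        simp
    _ ≤ ∫ u in (0:ℝ)..r, 2 ^ n * sinh u ^ n :=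
        integral_mono_on hr ((by fun_prop : Continuous _).intervalIntegrable _ _)
          ((by fun_prop : Continuous _).intervalIntegrable _ _) fun u hu => by
          rw [← mul_pow]; exact exp_sub_le_two_mul_sinh_pow hu.1 n

lemma omegaSphere_pos {d : ℕ} (hd : 0 < d) : 0 < omegaSphere d := by
  have : 0 < Real.Gamma ((d : ℝ) / 2) := Real.Gamma_pos_of_pos (by positivity)
  unfold omegaSphere
  positivity

lemma hypBallVol_pos {d : ℕ} (hd : 0 < d) {r : ℝ} (hr : 0 < r) : 0 < hypBallVol d r :=
  mul_pos (omegaSphere_pos hd) <| intervalIntegral_pos_of_pos_on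
    ((by fun_prop : Continuous _).intervalIntegrable _ _)
    (fun u hu => pow_pos (sinh_pos_iff.2 hu.1) _) hr

lemma hypBallVol_le {d : ℕ} (hd : 2 ≤ d) {r : ℝ} (hr : 0 ≤ r) :
    hypBallVol d r ≤ exp (r * (d - 1)) * (omegaSphere d / ((d - 1) * 2 ^ (d - 1))) := by
  have hI := two_pow_mul_integral_sinh_pow_le (n := d - 1) (by omega) hr
  rw [Nat.cast_pred (by omega), mul_comm _ r] at hI
  have hd' : (2 : ℝ) ≤ d := by exact_mod_cast hd
  have hω := omegaSphere_pos (by omega : 0 < d)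
  calc hypBallVol d r
      = omegaSphere d / 2 ^ (d - 1) * (2 ^ (d - 1) * ∫ u in (0:ℝ)..r, sinh u ^ (d - 1)) := by
        unfold hypBallVol; field_simp
    _ ≤ omegaSphere d / 2 ^ (d - 1) * (exp (r * (d - 1)) / (d - 1)) := by gcongr
    _ = exp (r * (d - 1)) * (omegaSphere d / ((d - 1) * 2 ^ (d - 1))) := by
        have : (d : ℝ) - 1 ≠ 0 := by linarith
        field_simp

lemma div_eq_mul_div_sub_div {A E m k : ℝ} (hm : m ≠ 0) (hk : k ≠ 0) (hD : k * A - m ^ 2 ≠ 0) :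
    A * E / m = k * A / (k * A - m ^ 2) * (A * E / m - m * E / k) := by
  have : A * E / m - m * E / k = (k * A - m ^ 2) * (E / (m * k)) := by field_simp
  rw [this, ← mul_assoc, div_mul_cancel₀ _ hD]
  field_simp

lemma exp_mul_le_hypBallVol {d : ℕ} (hd : 4 ≤ d) {r : ℝ} (hr : 0 ≤ r)
    (h : ((d : ℝ) - 1) ^ 2 < ((d : ℝ) - 3) * exp (2 * r)) :
    exp (r * (d - 1)) * (omegaSphere d / ((d - 1) * 2 ^ (d - 1))) ≤
      (d - 3) * exp (2 * r) / ((d - 3) * exp (2 * r) - (d - 1) ^ 2) * hypBallVol d r := by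
  have hd' : (4 : ℝ) ≤ d := by exact_mod_cast hd
  have hexp : exp ((d - 1) * r) = exp (2 * r) * exp ((d - 3) * r) := by
    rw [← exp_add]; ring_nf
  have hI := exp_sub_le_two_pow_mul_integral_sinh_pow (n := d - 1) (by omega) hr
  rw [Nat.cast_pred (by omega), show (d : ℝ) - 1 - 2 = d - 3 by ring, hexp] at hI
  have hω := omegaSphere_pos (by omega : 0 < d)
  calc exp (r * (d - 1)) * (omegaSphere d / ((d - 1) * 2 ^ (d - 1)))
      = omegaSphere d / 2 ^ (d - 1) * (exp (2 * r) * exp ((d - 3) * r) / (d - 1)) := by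
        have : (d : ℝ) - 1 ≠ 0 := by linarith
        rw [mul_comm r, hexp]
        field_simp
    _ = omegaSphere d / 2 ^ (d - 1) * ((d - 3) * exp (2 * r) / ((d - 3) * exp (2 * r) - (d - 1) ^ 2)
          * (exp (2 * r) * exp ((d - 3) * r) / (d - 1) - (d - 1) * exp ((d - 3) * r) / (d - 3))) := by
        rw [← div_eq_mul_div_sub_div] <;> linarith
    _ ≤ omegaSphere d / 2 ^ (d - 1) * ((d - 3) * exp (2 * r) / ((d - 3) * exp (2 * r) - (d - 1) ^ 2)
          * (2 ^ (d - 1) * ∫ u in (0:ℝ)..r, sinh u ^ (d - 1))) := by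
        have : (0 : ℝ) < (d - 3) * exp (2 * r) - (d - 1) ^ 2 := by linarith
        have : (0 : ℝ) < d - 3 := by linarith
        gcongr
    _ = (d - 3) * exp (2 * r) / ((d - 3) * exp (2 * r) - (d - 1) ^ 2) * hypBallVol d r := by
        unfold hypBallVol; field_simp

theorem stmt_11 (d : ℕ) (hd : 4 ≤ d) (r : ℝ) (hr : 0 < r)
    (h : ((d : ℝ) - 1) ^ 2 < ((d : ℝ) - 3) * Real.exp (2 * r)) :
    Real.log (hypBallVol d r) ≤
        r * ((d : ℝ) - 1) + Real.log (omegaSphere d / (((d : ℝ) - 1) * 2 ^ (d - 1))) ∧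
      r * ((d : ℝ) - 1) + Real.log (omegaSphere d / (((d : ℝ) - 1) * 2 ^ (d - 1))) ≤
        Real.log (((d : ℝ) - 3) * Real.exp (2 * r) /
            (((d : ℝ) - 3) * Real.exp (2 * r) - ((d : ℝ) - 1) ^ 2)) +
          Real.log (hypBallVol d r) := by
  have hd' : (4 : ℝ) ≤ d := by exact_mod_cast hd
  have hV := hypBallVol_pos (d := d) (by omega) hr
  have hP : 0 < omegaSphere d / (((d : ℝ) - 1) * 2 ^ (d - 1)) := by
    have := omegaSphere_pos (by omega : 0 < d)
    have : (0 : ℝ) < d - 1 := by linarith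
    positivity
  have hC : 0 < ((d : ℝ) - 3) * exp (2 * r) / (((d : ℝ) - 3) * exp (2 * r) - ((d : ℝ) - 1) ^ 2) := by
    have : (0 : ℝ) < d - 3 := by linarith
    have : (0 : ℝ) < (d - 3) * exp (2 * r) - (d - 1) ^ 2 := by linarith
    positivity
  rw [← log_exp (r * ((d : ℝ) - 1)), ← log_mul (exp_ne_zero _) hP.ne', ← log_mul hC.ne' hV.ne']
  exact ⟨log_le_log hV (hypBallVol_le (by omega) hr.le),
    log_le_log (by positivity) (exp_mul_le_hypBallVol hd hr.le h)⟩
end
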